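/- The operator τ_P is tripotent: for any node-edge-checkable problems Π and P, the problems τ_P(Π) and τ_P(τ_P(τ_P(Π))) are equivalent, i.e., each admits a zero-round relaxation to the other. -/

import Mathlib

set_option autoImplicit false

/-- A node-edge-checkable problem with (node) degree `Δ`: a set of node
configurations (cardinality-`Δ` multisets of labels) and a set of edge
configurations (cardinality-`2` multisets of labels). -/
structure NEProblem (Δ : ℕ) (Λ : Type) where
  nodeC : Set (Multiset Λ)
  edgeC : Set (Multiset Λ)
  node_card : ∀ m ∈ nodeC, Multiset.card m = Δ
  edge_card : ∀ m ∈ edgeC, Multiset.card m = 2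

/-- Nonempty subsets of `Λ`: the labels of `R*(P)`, `R(P)`, `R̄(P)`. -/
abbrev SubS (Λ : Type) : Type := {S : Set Λ // S.Nonempty}

variable {Δ : ℕ} {Λ Λ' Λ'' ΛP ΛI ΛF : Type}

/-- `f` is a port-local relaxation function from `P` to `P'`. -/
def IsPortLocalRelax (P : NEProblem Δ Λ) (P' : NEProblem Δ Λ') (f : Λ → Λ') : Prop :=
  (∀ m ∈ P.nodeC, m.map f ∈ P'.nodeC) ∧ (∀ m ∈ P.edgeC, m.map f ∈ P'.edgeC)

/-- An occurrence-based relaxation witness from `P` to `P'`: for each node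
configuration `C` of `P`, `p C` is a multiset of pairs matching each occurrence
of a label in `C` with its image label, such that node configurations are mapped
into node configurations of `P'`, and any two occurrences forming an edge
configuration of `P` are mapped to an edge configuration of `P'`. -/
def IsRelaxWitness (P : NEProblem Δ Λ) (P' : NEProblem Δ Λ')
    (p : Multiset Λ → Multiset (Λ × Λ')) : Prop :=
  (∀ C ∈ P.nodeC, (p C).map Prod.fst = C) ∧
  (∀ C ∈ P.nodeC, (p C).map Prod.snd ∈ P'.nodeC) ∧
  (∀ C ∈ P.nodeC, ∀ C' ∈ P.nodeC, ∀ q ∈ p C, ∀ q' ∈ p C',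
    ({q.1, q'.1} : Multiset Λ) ∈ P.edgeC → ({q.2, q'.2} : Multiset Λ') ∈ P'.edgeC)

/-- `P →0 P'` : `P'` is a relaxation of `P` (occurrence-based sense). -/
def Relaxes (P : NEProblem Δ Λ) (P' : NEProblem Δ Λ') : Prop :=
  ∃ p, IsRelaxWitness P P' p

/-- An edge-based relaxation witness from `P` to `P'` (dual of `IsRelaxWitness`). -/
def IsEdgeRelaxWitness (P : NEProblem Δ Λ) (P' : NEProblem Δ Λ')
    (p : Multiset Λ → Multiset (Λ × Λ')) : Prop :=
  (∀ C ∈ P.edgeC, (p C).map Prod.fst = C) ∧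
  (∀ C ∈ P.edgeC, (p C).map Prod.snd ∈ P'.edgeC) ∧
  (∀ s : Multiset (Λ × Λ'), (∀ q ∈ s, ∃ C ∈ P.edgeC, q ∈ p C) →
    s.map Prod.fst ∈ P.nodeC → s.map Prod.snd ∈ P'.nodeC)

/-- `P'` is an edge-based relaxation of `P`. -/
def EdgeRelaxes (P : NEProblem Δ Λ) (P' : NEProblem Δ Λ') : Prop :=
  ∃ p, IsEdgeRelaxWitness P P' p

/-- The problem `R*(P)`: labels are nonempty subsets of the labels of `P`;
a node configuration is any `Δ`-multiset of sets admitting a selection forming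
a node configuration of `P`; an edge configuration is any pair of sets all of
whose selections form edge configurations of `P`. -/
def RStar (P : NEProblem Δ Λ) : NEProblem Δ (SubS Λ) where
  nodeC := {m | Multiset.card m = Δ ∧ ∃ p : Multiset (SubS Λ × Λ),
    p.map Prod.fst = m ∧ (∀ q ∈ p, q.2 ∈ q.1.val) ∧ p.map Prod.snd ∈ P.nodeC}
  edgeC := {m | ∃ S₁ S₂ : SubS Λ, m = {S₁, S₂} ∧
    ∀ L₁ ∈ S₁.val, ∀ L₂ ∈ S₂.val, ({L₁, L₂} : Multiset Λ) ∈ P.edgeC}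
  node_card := fun _ hm => hm.1
  edge_card := by rintro m ⟨S₁, S₂, rfl, -⟩; rfl

/-- The product `P × P'` of two node-edge-checkable problems. -/
def prodP (P : NEProblem Δ Λ) (P' : NEProblem Δ Λ') : NEProblem Δ (Λ × Λ') where
  nodeC := {m | m.map Prod.fst ∈ P.nodeC ∧ m.map Prod.snd ∈ P'.nodeC}
  edgeC := {m | m.map Prod.fst ∈ P.edgeC ∧ m.map Prod.snd ∈ P'.edgeC}
  node_card := fun m hm => by have := P.node_card _ hm.1; simpa using this
  edge_card := fun m hm => by have := P.edge_card _ hm.1; simpa using this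

/-- The tripotent input `τ_P(Pi)`: labels are functions from the labels of `Pi`
to the labels of `R*(P)`; a multiset of functions is a node (resp. edge)
configuration iff applying it (in any matching) to every node (resp. edge)
configuration of `Pi` yields a node (resp. edge) configuration of `R*(P)`. -/
def tau (P : NEProblem Δ ΛP) (Pi : NEProblem Δ Λ) : NEProblem Δ (Λ → SubS ΛP) where
  nodeC := {m | Multiset.card m = Δ ∧ ∀ C ∈ Pi.nodeC,
    ∀ p : Multiset ((Λ → SubS ΛP) × Λ), p.map Prod.fst = m → p.map Prod.snd = C →
      p.map (fun q => q.1 q.2) ∈ (RStar P).nodeC}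
  edgeC := {m | Multiset.card m = 2 ∧ ∀ C ∈ Pi.edgeC,
    ∀ p : Multiset ((Λ → SubS ΛP) × Λ), p.map Prod.fst = m → p.map Prod.snd = C →
      p.map (fun q => q.1 q.2) ∈ (RStar P).edgeC}
  node_card := fun _ hm => hm.1
  edge_card := fun _ hm => hm.1

/-- A pair `{S₁, S₂}` of nonempty sets of labels satisfies the universal
quantifier w.r.t. the edge constraint of `P`. -/
def univEdge (P : NEProblem Δ Λ) (m : Multiset (SubS Λ)) : Prop :=
  ∃ S₁ S₂ : SubS Λ, m = {S₁, S₂} ∧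
    ∀ L₁ ∈ S₁.val, ∀ L₂ ∈ S₂.val, ({L₁, L₂} : Multiset Λ) ∈ P.edgeC

/-- A `Δ`-multiset of nonempty sets of labels satisfies the universal quantifier
w.r.t. the node constraint of `P`. -/
def univNode (P : NEProblem Δ Λ) (m : Multiset (SubS Λ)) : Prop :=
  Multiset.card m = Δ ∧ ∀ p : Multiset (SubS Λ × Λ),
    p.map Prod.fst = m → (∀ q ∈ p, q.2 ∈ q.1.val) → p.map Prod.snd ∈ P.nodeC

/-- `m'` strictly dominates `m` (coordinatewise inclusion up to permutation,
strict in at least one coordinate). -/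
def strictlyDominates (m' m : Multiset (SubS Λ)) : Prop :=
  ∃ p : Multiset (SubS Λ × SubS Λ), p.map Prod.fst = m' ∧ p.map Prod.snd = m ∧
    (∀ q ∈ p, q.2.val ⊆ q.1.val) ∧ ∃ q ∈ p, q.2.val ⊂ q.1.val

/-- The edge constraint of `R(P)`: maximal universally-satisfying pairs. -/
def REedge (P : NEProblem Δ Λ) : Set (Multiset (SubS Λ)) :=
  {m | univEdge P m ∧ ∀ m', univEdge P m' → ¬ strictlyDominates m' m}

/-- The problem `R(P)`. -/
def RE (P : NEProblem Δ Λ) : NEProblem Δ (SubS Λ) where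
  nodeC := {m | Multiset.card m = Δ ∧ (∀ S ∈ m, ∃ e ∈ REedge P, S ∈ e) ∧
    ∃ p : Multiset (SubS Λ × Λ), p.map Prod.fst = m ∧ (∀ q ∈ p, q.2 ∈ q.1.val) ∧
      p.map Prod.snd ∈ P.nodeC}
  edgeC := REedge P
  node_card := fun _ hm => hm.1
  edge_card := by rintro m ⟨⟨S₁, S₂, rfl, -⟩, -⟩; rfl

/-- The node constraint of `R̄(P)`: maximal universally-satisfying `Δ`-multisets. -/
def REbarNode (P : NEProblem Δ Λ) : Set (Multiset (SubS Λ)) :=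
  {m | univNode P m ∧ ∀ m', univNode P m' → ¬ strictlyDominates m' m}

/-- The problem `R̄(P)` (dual of `R(P)`). -/
def REbar (P : NEProblem Δ Λ) : NEProblem Δ (SubS Λ) where
  nodeC := REbarNode P
  edgeC := {m | ∃ S₁ S₂ : SubS Λ, m = {S₁, S₂} ∧
    (∃ e ∈ REbarNode P, S₁ ∈ e) ∧ (∃ e ∈ REbarNode P, S₂ ∈ e) ∧
    ∃ L₁ ∈ S₁.val, ∃ L₂ ∈ S₂.val, ({L₁, L₂} : Multiset Λ) ∈ P.edgeC}
  node_card := fun _ hm => hm.1.1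
  edge_card := by rintro m ⟨S₁, S₂, rfl, -⟩; rfl

/-- One step of round elimination: `Q = R̄ ∘ R`. -/
def Qop (P : NEProblem Δ Λ) : NEProblem Δ (SubS (SubS Λ)) := REbar (RE P)

/-- Label type of `Q^i(P)`. -/
def QIterType (Λ : Type) : ℕ → Type
  | 0 => Λ
  | i + 1 => SubS (SubS (QIterType Λ i))

/-- `Q^i(P)`. -/
def QIter (P : NEProblem Δ Λ) : (i : ℕ) → NEProblem Δ (QIterType Λ i)
  | 0 => P
  | i + 1 => Qop (QIter P i)

/-- Labels of `P` occurring in some configuration of `P`. -/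
def usedLabels (P : NEProblem Δ Λ) : Set Λ :=
  {L | (∃ C ∈ P.nodeC, L ∈ C) ∨ (∃ C ∈ P.edgeC, L ∈ C)}

/-- `P'` arises from `P` by a bijective renaming of (used) labels. -/
def EquivUpToRenaming (P : NEProblem Δ Λ) (P' : NEProblem Δ Λ') : Prop :=
  ∃ f : Λ → Λ', Set.InjOn f (usedLabels P) ∧
    P'.nodeC = (fun m => m.map f) '' P.nodeC ∧
    P'.edgeC = (fun m => m.map f) '' P.edgeC

/-- The trivial one-label problem. -/
def trivProblem (Δ : ℕ) : NEProblem Δ Unit where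
  nodeC := {Multiset.replicate Δ ()}
  edgeC := {Multiset.replicate 2 ()}
  node_card := by intro m hm; rw [Set.mem_singleton_iff] at hm; subst hm; simp
  edge_card := by intro m hm; rw [Set.mem_singleton_iff] at hm; subst hm; simp


/-!
Evaluation `x ↦ (h ↦ h x)` is a port-local relaxation from any problem `X` to `τ_P(τ_P(X))`, and
`τ_P` turns a port-local relaxation `f : X → Y` into one `τ_P(Y) → τ_P(X)`, namely `g ↦ g ∘ f`.
Evaluation at `τ_P(Π)` relaxes `τ_P(Π)` to `τ_P³(Π)`; applying `τ_P` to evaluation at `Π` relaxes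
`τ_P³(Π)` back to `τ_P(Π)`. This is the usual argument that `X ↦ X^{X^Y}` is tripotent in the
exponent, since a port-local relaxation only has to be checked configuration by configuration.
-/

theorem Multiset.exists_lift_of_map_fst_eq_map {α β σ : Type*} {φ : σ → α}
    {s : Multiset σ} {p : Multiset (α × β)} (h : p.map Prod.fst = s.map φ) :
    ∃ p' : Multiset (σ × β), p'.map Prod.fst = s ∧ p'.map (Prod.map φ id) = p := by
  induction s using Multiset.induction_on generalizing p with
  | empty => exact ⟨0, rfl, (Multiset.map_eq_zero.1 h).symm⟩
  | cons a s ih =>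
    rw [Multiset.map_cons] at h
    obtain ⟨q, hq, hqa⟩ := Multiset.mem_map.1 (h ▸ Multiset.mem_cons_self (φ a) _)
    obtain ⟨t, hp⟩ := Multiset.exists_cons_of_mem hq
    rw [hp, Multiset.map_cons, hqa, Multiset.cons_inj_right] at h
    obtain ⟨p', hfst, hp'⟩ := ih h
    refine ⟨(a, q.2) ::ₘ p', by simp [hfst], ?_⟩
    rw [hp, Multiset.map_cons, hp', Prod.map_apply, ← hqa]
    rfl

/-- Both constraints of `τ_P(Π)` have this shape, with `T` a constraint of `R*(P)`. -/
def evalClosed {α β : Type*} (T : Set (Multiset β)) (A : Set (Multiset α)) :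
    Set (Multiset (α → β)) :=
  {m | ∀ C ∈ A, ∀ p : Multiset ((α → β) × α), p.map Prod.fst = m → p.map Prod.snd = C →
    p.map (fun q => q.1 q.2) ∈ T}

section evalClosed

variable {α α' β : Type*} {T : Set (Multiset β)}

theorem map_comp_mem_evalClosed {A : Set (Multiset α)} {A' : Set (Multiset α')} {f : α → α'}
    (hf : ∀ C ∈ A, C.map f ∈ A') {m : Multiset (α' → β)} (hm : m ∈ evalClosed T A') :
    m.map (· ∘ f) ∈ evalClosed T A := by
  intro C hC p hfst hsnd
  -- a matching of `m.map (· ∘ f)` with `C` is a matching of `m` with `C.map f`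
  obtain ⟨p', hfst', rfl⟩ := Multiset.exists_lift_of_map_fst_eq_map hfst
  have key := hm (C.map f) (hf C hC) (p'.map (Prod.map id f))
    (by rw [Multiset.map_map]; exact hfst')
    (by rw [← hsnd, Multiset.map_map, Multiset.map_map, Multiset.map_map]; rfl)
  rw [Multiset.map_map] at key ⊢
  exact key

theorem map_eval_mem_evalClosed {A : Set (Multiset α)} {B : Set (Multiset (α → β))}
    (hB : B ⊆ evalClosed T A) {C : Multiset α} (hC : C ∈ A) :
    C.map Function.eval ∈ evalClosed T B := by
  intro D hD p hfst hsnd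
  -- a matching of `C.map eval` with `D` is, swapped, a matching of `D` with `C`
  obtain ⟨p', hfst', rfl⟩ := Multiset.exists_lift_of_map_fst_eq_map hfst
  have key := hB hD C hC (p'.map Prod.swap)
    (by rw [← hsnd, Multiset.map_map, Multiset.map_map]; rfl)
    (by rw [Multiset.map_map]; exact hfst')
  rw [Multiset.map_map] at key ⊢
  exact key

end evalClosed

theorem IsPortLocalRelax.relaxes {P : NEProblem Δ Λ} {P' : NEProblem Δ Λ'} {f : Λ → Λ'}
    (hf : IsPortLocalRelax P P' f) : Relaxes P P' := by
  refine ⟨fun C => C.map fun x => (x, f x), fun C _ => ?_, fun C hC => ?_, ?_⟩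
  · simp [Multiset.map_map]
  · simpa [Multiset.map_map] using hf.1 C hC
  · intro C _ C' _ q hq q' hq' he
    obtain ⟨x, -, rfl⟩ := Multiset.mem_map.1 hq
    obtain ⟨x', -, rfl⟩ := Multiset.mem_map.1 hq'
    exact hf.2 _ he

theorem IsPortLocalRelax.tau (P : NEProblem Δ ΛP) {X : NEProblem Δ Λ} {Y : NEProblem Δ Λ'}
    {f : Λ → Λ'} (hf : IsPortLocalRelax X Y f) :
    IsPortLocalRelax (tau P Y) (tau P X) (· ∘ f) :=
  ⟨fun _ hm => ⟨(Multiset.card_map _ _).trans hm.1, map_comp_mem_evalClosed hf.1 hm.2⟩,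
    fun _ hm => ⟨(Multiset.card_map _ _).trans hm.1, map_comp_mem_evalClosed hf.2 hm.2⟩⟩

theorem isPortLocalRelax_eval_tau_tau (P : NEProblem Δ ΛP) (X : NEProblem Δ Λ) :
    IsPortLocalRelax X (tau P (tau P X)) Function.eval :=
  ⟨fun C hC => ⟨(Multiset.card_map _ _).trans (X.node_card C hC),
      map_eval_mem_evalClosed (fun _ hD => hD.2) hC⟩,
    fun C hC => ⟨(Multiset.card_map _ _).trans (X.edge_card C hC),
      map_eval_mem_evalClosed (fun _ hD => hD.2) hC⟩⟩

/-- `τ_P` is tripotent: `τ_P(Pi)` and `τ_P(τ_P(τ_P(Pi)))` are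
equivalent, i.e. each admits a zero-round relaxation to the other. -/
theorem tau_tripotent
    {Δ : ℕ} {Λ ΛP : Type} (P : NEProblem Δ ΛP) (Pi : NEProblem Δ Λ) :
    Relaxes (tau P Pi) (tau P (tau P (tau P Pi))) ∧
    Relaxes (tau P (tau P (tau P Pi))) (tau P Pi) :=
  ⟨(isPortLocalRelax_eval_tau_tau P (tau P Pi)).relaxes,
    ((isPortLocalRelax_eval_tau_tau P Pi).tau P).relaxes⟩
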